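/- arXiv:1710.07741 — 10 statements merged into one kernel-verified Lean document; each statement's English description precedes it below -/
import Mathlib

section
/- A graph G admits a bipartizing matching if and only if G admits a (2,1)-coloring, i.e., a partition of V(G) into two sets each inducing a subgraph of maximum degree at most 1. -/
/-!
The monochromatic edges of a 2-coloring `c` of `V` are exactly what keeps `c` from being a
proper coloring of `G`. So `c` is a (2,1)-coloring iff its monochromatic edges form a matching,
and this matching is bipartizing; conversely, a proper 2-coloring of `G - M` has all its
monochromatic edges in `M`, hence it is a (2,1)-coloring when `M` is a matching.
-/

/-- `M` is a bipartizing matching of `G`: `M` is a subgraph of `G` that is a matching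
(every vertex has at most one `M`-neighbor) and `G - M` is bipartite (2-colorable). -/
def IsBipartizingMatching {V : Type*} (G M : SimpleGraph V) : Prop :=
  M ≤ G ∧ (∀ v u w : V, M.Adj v u → M.Adj v w → u = w) ∧ (G \ M).Colorable 2

namespace SimpleGraph

variable {V α : Type*} (G : SimpleGraph V)

-- Oriented as `c v = c u` so that the neighbor set of `v` is literally `{u | G.Adj v u ∧ c u = c v}`.
def monochromatic (c : V → α) : SimpleGraph V where
  Adj u v := G.Adj u v ∧ c v = c u
  symm := ⟨fun _ _ h => ⟨h.1.symm, h.2.symm⟩⟩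
  loopless := ⟨fun u h => G.loopless.irrefl u h.1⟩

theorem monochromatic_le (c : V → α) : G.monochromatic c ≤ G :=
  fun _ _ h => h.1

def coloringSdiffMonochromatic (c : V → α) : (G \ G.monochromatic c).Coloring α :=
  Coloring.mk c fun h heq => h.2 ⟨h.1, heq.symm⟩

theorem monochromatic_le_of_coloring_sdiff {M : SimpleGraph V} (C : (G \ M).Coloring α) :
    G.monochromatic C ≤ M :=
  fun _ _ h => by_contra fun hM => C.valid ⟨h.1, hM⟩ h.2.symm

end SimpleGraph

/-- `G` has a bipartizing matching iff `G` has a `(2,1)`-coloring. -/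
theorem bm_iff_two_one_coloring {V : Type*} (G : SimpleGraph V) :
    (∃ M, IsBipartizingMatching G M) ↔
      ∃ c : V → Fin 2, ∀ v : V, {u : V | G.Adj v u ∧ c u = c v}.Subsingleton := by
  constructor
  · rintro ⟨M, -, hM, ⟨C⟩⟩
    have hmono := G.monochromatic_le_of_coloring_sdiff C
    exact ⟨C, fun v _ hu _ hw => hM v _ _ (hmono hu) (hmono hw)⟩
  · rintro ⟨c, hc⟩
    exact ⟨G.monochromatic c, G.monochromatic_le c, fun v _ _ hu hw => hc v hu hw,
      ⟨G.coloringSdiffMonochromatic c⟩⟩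
end

section
/- For every positive integer k and every integer d ≥ 0, every graph G of maximum degree Δ admits a (k, ⌊Δ/k⌋)-coloring, i.e., a partition of V(G) into k parts such that each part induces a subgraph of maximum degree at most ⌊Δ/k⌋. -/
open Finset

namespace SimpleGraph

variable {V α : Type*} (G : SimpleGraph V)

def monochromaticSubgraph (c : V → α) : SimpleGraph V where
  Adj u w := G.Adj u w ∧ c u = c w
  symm := ⟨fun _ _ h => ⟨h.1.symm, h.2.symm⟩⟩
  loopless := ⟨fun u h => G.loopless.irrefl u h.1⟩

@[simp]
theorem monochromaticSubgraph_adj {c : V → α} {u w : V} :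
    (G.monochromaticSubgraph c).Adj u w ↔ G.Adj u w ∧ c u = c w :=
  Iff.rfl

instance [DecidableRel G.Adj] [DecidableEq α] (c : V → α) :
    DecidableRel (G.monochromaticSubgraph c).Adj :=
  fun u w => inferInstanceAs (Decidable (G.Adj u w ∧ c u = c w))

theorem deleteIncidenceSet_monochromaticSubgraph_update [DecidableEq V] (c : V → α) (v : V)
    (b : α) :
    (G.monochromaticSubgraph (Function.update c v b)).deleteIncidenceSet v =
      (G.monochromaticSubgraph c).deleteIncidenceSet v := by
  ext u w
  simp +contextual [deleteIncidenceSet_adj, Function.update_of_ne]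

variable [Fintype V] [DecidableRel G.Adj] [DecidableEq α]

theorem degree_monochromaticSubgraph (c : V → α) (v : V) :
    (G.monochromaticSubgraph c).degree v = #{u ∈ G.neighborFinset v | c u = c v} := by
  rw [← card_neighborFinset_eq_degree]
  congr 1
  ext u
  simp [eq_comm]

theorem card_edgeFinset_monochromaticSubgraph_update_add [DecidableEq V] (c : V → α) (v : V)
    (b : α) :
    #(G.monochromaticSubgraph (Function.update c v b)).edgeFinset +
        (G.monochromaticSubgraph c).degree v =
      #(G.monochromaticSubgraph c).edgeFinset +
        (G.monochromaticSubgraph (Function.update c v b)).degree v := by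
  have hdel' :=
    card_edgeFinset_deleteIncidenceSet (G.monochromaticSubgraph (Function.update c v b)) v
  have hdel := card_edgeFinset_deleteIncidenceSet (G.monochromaticSubgraph c) v
  have hsame : #((G.monochromaticSubgraph (Function.update c v b)).deleteIncidenceSet v).edgeFinset
      = #((G.monochromaticSubgraph c).deleteIncidenceSet v).edgeFinset := by
    rw [edgeFinset_inj.mpr (deleteIncidenceSet_monochromaticSubgraph_update G c v b)]
  have hle := degree_le_card_edgeFinset (G.monochromaticSubgraph c) v
  have hle' := degree_le_card_edgeFinset (G.monochromaticSubgraph (Function.update c v b)) v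
  omega

theorem exists_degree_monochromaticSubgraph_update_le [DecidableEq V] [Fintype α] [Nonempty α]
    (c : V → α) (v : V) :
    ∃ b, (G.monochromaticSubgraph (Function.update c v b)).degree v ≤
      G.degree v / Fintype.card α := by
  have hlt : #(G.neighborFinset v) < #(univ : Finset α) * (G.degree v / Fintype.card α + 1) :=
    Nat.lt_mul_div_succ _ Fintype.card_pos
  obtain ⟨b, -, hb⟩ := exists_card_fiber_lt_of_card_lt_mul (f := c) hlt
  refine ⟨b, ?_⟩
  rw [degree_monochromaticSubgraph, Function.update_self]
  convert Nat.le_of_lt_succ hb using 3 with u hu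
  rw [Function.update_of_ne (G.ne_of_adj ((G.mem_neighborFinset v u).1 hu)).symm]

theorem exists_forall_degree_monochromaticSubgraph_le [DecidableEq V] [Fintype α] [Nonempty α] :
    ∃ c : V → α, ∀ v,
      (G.monochromaticSubgraph c).degree v ≤ G.degree v / Fintype.card α := by
  obtain ⟨c, -, hmin⟩ := exists_min_image univ
    (fun c : V → α => #(G.monochromaticSubgraph c).edgeFinset) univ_nonempty
  refine ⟨c, fun v => ?_⟩
  by_contra! hv
  obtain ⟨b, hb⟩ := G.exists_degree_monochromaticSubgraph_update_le c v
  have hswap := G.card_edgeFinset_monochromaticSubgraph_update_add c v b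
  have hminimal := hmin (Function.update c v b) (mem_univ _)
  omega

end SimpleGraph

/-- Lovász: every graph of maximum degree at most `Δ` admits a `(k, ⌊Δ/k⌋)`-coloring. -/
theorem lovasz_partition {V : Type*} [Fintype V] [DecidableEq V] (G : SimpleGraph V)
    [DecidableRel G.Adj] (k Δ : ℕ) (hk : 0 < k) (hΔ : ∀ v : V, G.degree v ≤ Δ) :
    ∃ c : V → Fin k, ∀ v : V,
      ((G.neighborFinset v).filter (fun u => c u = c v)).card ≤ Δ / k := by
  have : NeZero k := ⟨hk.ne'⟩
  obtain ⟨c, hc⟩ := G.exists_forall_degree_monochromaticSubgraph_le (α := Fin k)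
  refine ⟨c, fun v => ?_⟩
  rw [← G.degree_monochromaticSubgraph]
  simpa only [Fintype.card_fin] using (hc v).trans (Nat.div_le_div_right (hΔ v))
end

section
/- Let G be a graph with a bipartizing matching M, and let D be a diamond subgraph of G (a K₄ minus one edge) with vertices u, v₁, v₂, v₃ where u and v₂ are the two vertices of degree 3 in D. Then M matches both u and v₂ (each is an endpoint of some edge of M). -/
lemma SimpleGraph.adj_or_adj_or_adj_of_sdiff_colorable_two {V : Type*} {G M : SimpleGraph V}
    (hC : (G \ M).Colorable 2) {a b c : V} (hab : G.Adj a b) (hac : G.Adj a c)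
    (hbc : G.Adj b c) : M.Adj a b ∨ M.Adj a c ∨ M.Adj b c := by
  classical
  by_contra! h
  obtain ⟨hab', hac', hbc'⟩ := h
  exact hC.cliqueFree (m := 3) (by norm_num) {a, b, c}
    ((G \ M).is3Clique_triple_iff.2 ⟨⟨hab, hab'⟩, ⟨hac, hac'⟩, ⟨hbc, hbc'⟩⟩)

theorem bm_matches_diamond_apexes_general {V : Type*} (G M : SimpleGraph V)
    (hM : IsBipartizingMatching G M) (u v₁ v₂ v₃ : V)
    (h13 : v₁ ≠ v₃)
    (e1 : G.Adj u v₁) (e2 : G.Adj u v₂) (e3 : G.Adj u v₃)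
    (e4 : G.Adj v₁ v₂) (e5 : G.Adj v₂ v₃) :
    (∃ a, M.Adj u a) ∧ (∃ b, M.Adj v₂ b) := by
  obtain ⟨-, hmatch, hC⟩ := hM
  rcases G.adj_or_adj_or_adj_of_sdiff_colorable_two hC e1 e2 e4 with m1 | m2 | m12
  · rcases G.adj_or_adj_or_adj_of_sdiff_colorable_two hC e2 e3 e5 with m2 | m3 | m23
    · exact ⟨⟨v₂, m2⟩, ⟨u, m2.symm⟩⟩
    · exact absurd (hmatch u v₁ v₃ m1 m3) h13
    · exact ⟨⟨v₁, m1⟩, ⟨v₃, m23⟩⟩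
  · exact ⟨⟨v₂, m2⟩, ⟨u, m2.symm⟩⟩
  · rcases G.adj_or_adj_or_adj_of_sdiff_colorable_two hC e2 e3 e5 with m2 | m3 | m23
    · exact ⟨⟨v₂, m2⟩, ⟨u, m2.symm⟩⟩
    · exact ⟨⟨v₃, m3⟩, ⟨v₁, m12.symm⟩⟩
    · exact absurd (hmatch v₂ v₁ v₃ m12.symm m23) h13

/-- In any bipartizing matching `M`, both degree-3 vertices of a diamond subgraph are matched. -/
theorem bm_matches_diamond_apexes {V : Type*} (G M : SimpleGraph V)
    (hM : IsBipartizingMatching G M) (u v₁ v₂ v₃ : V)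
    (h12 : v₁ ≠ v₂) (h13 : v₁ ≠ v₃) (h23 : v₂ ≠ v₃)
    (hu1 : u ≠ v₁) (hu2 : u ≠ v₂) (hu3 : u ≠ v₃)
    (e1 : G.Adj u v₁) (e2 : G.Adj u v₂) (e3 : G.Adj u v₃)
    (e4 : G.Adj v₁ v₂) (e5 : G.Adj v₂ v₃) :
    (∃ a, M.Adj u a) ∧ (∃ b, M.Adj v₂ b) :=
  bm_matches_diamond_apexes_general G M hM u v₁ v₂ v₃ h13 e1 e2 e3 e4 e5
end

section
/- If a graph G admits a bipartizing matching, then for every vertex v of G, the induced subgraph G[N(v)] on the neighborhood of v does not contain two vertex-disjoint paths on 3 vertices. -/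
namespace SimpleGraph

variable {V : Type*} {G M : SimpleGraph V}

theorem triangle_meets_of_colorable_two_sdiff (hC : (G \ M).Colorable 2) {x y z : V}
    (hxy : G.Adj x y) (hyz : G.Adj y z) (hxz : G.Adj x z) :
    M.Adj x y ∨ M.Adj y z ∨ M.Adj x z := by
  classical
  by_contra! h
  obtain ⟨hMxy, hMyz, hMxz⟩ := h
  exact hC.cliqueFree (m := 3) (by norm_num) {x, y, z}
    (is3Clique_triple_iff.2 ⟨⟨hxy, hMxy⟩, ⟨hxz, hMxz⟩, ⟨hyz, hMyz⟩⟩)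

theorem exists_matched_of_path_three_in_neighborSet (hC : (G \ M).Colorable 2)
    (hM : ∀ v u w : V, M.Adj v u → M.Adj v w → u = w)
    {v a₁ a₂ a₃ : V} (h₁ : G.Adj v a₁) (h₂ : G.Adj v a₂) (h₃ : G.Adj v a₃)
    (h₁₂ : G.Adj a₁ a₂) (h₂₃ : G.Adj a₂ a₃) (h₁₃ : a₁ ≠ a₃) :
    M.Adj v a₁ ∨ M.Adj v a₂ ∨ M.Adj v a₃ := by
  rcases triangle_meets_of_colorable_two_sdiff hC h₁ h₁₂ h₂ with h | hM₂₁ | h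
  · exact .inl h
  · rcases triangle_meets_of_colorable_two_sdiff hC h₂ h₂₃ h₃ with h | hM₂₃ | h
    · exact .inr (.inl h)
    · exact absurd (hM a₂ a₁ a₃ hM₂₁.symm hM₂₃) h₁₃
    · exact .inr (.inr h)
  · exact .inr (.inl h)

end SimpleGraph

open SimpleGraph in
/-- If `G` has a bipartizing matching, then no neighborhood contains two vertex-disjoint `P₃`'s. -/
theorem bm_no_two_disjoint_P3_in_neighborhood {V : Type*} (G : SimpleGraph V)
    (hG : ∃ M, IsBipartizingMatching G M) (v : V) :
    ¬ ∃ a₁ a₂ a₃ b₁ b₂ b₃ : V,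
      ([a₁, a₂, a₃, b₁, b₂, b₃] : List V).Nodup ∧
      (∀ x ∈ ([a₁, a₂, a₃, b₁, b₂, b₃] : List V), G.Adj v x) ∧
      G.Adj a₁ a₂ ∧ G.Adj a₂ a₃ ∧ G.Adj b₁ b₂ ∧ G.Adj b₂ b₃ := by
  rintro ⟨a₁, a₂, a₃, b₁, b₂, b₃, hnd, hv, ha₁₂, ha₂₃, hb₁₂, hb₂₃⟩
  obtain ⟨M, -, hM, hC⟩ := hG
  simp only [List.nodup_cons, List.mem_cons, List.not_mem_nil, or_false, not_or] at hnd
  simp only [List.mem_cons, List.not_mem_nil, or_false, forall_eq_or_imp, forall_eq] at hv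
  obtain ⟨hva₁, hva₂, hva₃, hvb₁, hvb₂, hvb₃⟩ := hv
  have hA := exists_matched_of_path_three_in_neighborSet hC hM hva₁ hva₂ hva₃ ha₁₂ ha₂₃ (by tauto)
  have hB := exists_matched_of_path_three_in_neighborSet hC hM hvb₁ hvb₂ hvb₃ hb₁₂ hb₂₃ (by tauto)
  rcases hA with h | h | h <;> rcases hB with h' | h' | h' <;>
    exact absurd (hM v _ _ h h') (by tauto)
end

section
/- If a graph G admits a bipartizing matching, then G does not contain the wheel W_k as a subgraph for any k ≥ 4. -/
theorem Nat.add_mod_ne_mod {a d k : ℕ} (hd : 0 < d) (hdk : d < k) : (a + d) % k ≠ a % k := by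
  intro h
  have hdvd : k ∣ d := Nat.modEq_zero_iff_dvd.mp (Nat.ModEq.add_left_cancel' a h)
  exact (Nat.le_of_dvd hd hdvd).not_gt hdk

theorem Nat.exists_run_not_of_mod_eq {k r : ℕ} {P : ℕ → Prop}
    (hP : ∀ m n, P m → P n → m % k = n % k) (hr : r < k) :
    ∃ n, ∀ d < r, ¬ P (n + d) := by
  by_cases h : ∃ j, P j
  · obtain ⟨j, hj⟩ := h
    refine ⟨j + 1, fun d hd hPd => ?_⟩
    have hmod := hP _ _ hPd hj
    rw [add_assoc] at hmod
    exact Nat.add_mod_ne_mod (by omega) (by omega) hmod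
  · push Not at h
    exact ⟨0, fun d _ => by simpa using h d⟩

theorem Fin.eq_of_ne_of_ne_two {a b x : Fin 2} (ha : a ≠ x) (hb : b ≠ x) : a = b := by
  omega

namespace SimpleGraph

variable {V α : Type*} {G M : SimpleGraph V}

theorem Coloring.adj_of_adj_of_color_eq (C : (G \ M).Coloring α) {u w : V} (h : G.Adj u w)
    (hC : C u = C w) : M.Adj u w := by
  by_contra hM
  exact C.valid ((G.sdiff_adj M u w).mpr ⟨h, hM⟩) hC

theorem Coloring.eq_of_adj_of_adj_of_color_eq (C : (G \ M).Coloring α)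
    (hM : ∀ v u w : V, M.Adj v u → M.Adj v w → u = w) {a b c : V}
    (hab : G.Adj a b) (hbc : G.Adj b c) (ha : C a = C b) (hc : C c = C b) : a = c :=
  hM b a c (C.adj_of_adj_of_color_eq hab ha).symm (C.adj_of_adj_of_color_eq hbc hc.symm)

end SimpleGraph

/-- If `G` has a bipartizing matching, then `G` contains no wheel `W_k` (`k ≥ 4`) as a subgraph. -/
theorem bm_no_wheel {V : Type*} (G : SimpleGraph V)
    (hG : ∃ M, IsBipartizingMatching G M) (k : ℕ) (hk : 4 ≤ k) :
    ¬ ∃ (c : V) (f : Fin k → V), Function.Injective f ∧ (∀ i, c ≠ f i) ∧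
      (∀ i : Fin k, G.Adj c (f i)) ∧
      (∀ i : Fin k, G.Adj (f i) (f ⟨(i.val + 1) % k, Nat.mod_lt _ (by omega)⟩)) := by
  rintro ⟨c, f, hinj, -, hspoke, hrim⟩
  obtain ⟨M, -, hM, ⟨C⟩⟩ := hG
  set g : ℕ → V := fun n => f ⟨n % k, Nat.mod_lt _ (by omega)⟩
  have hg_adj (n : ℕ) : G.Adj (g n) (g (n + 1)) := by
    simpa only [g, Nat.mod_add_mod] using hrim ⟨n % k, Nat.mod_lt _ (by omega)⟩
  have hg_inj (m n : ℕ) (h : g m = g n) : m % k = n % k := Fin.val_eq_of_eq (hinj h)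
  have hcentre (m n : ℕ) (hm : C (g m) = C c) (hn : C (g n) = C c) : m % k = n % k :=
    hg_inj m n (C.eq_of_adj_of_adj_of_color_eq hM (hspoke _).symm (hspoke _) hm hn)
  obtain ⟨n, hn⟩ := Nat.exists_run_not_of_mod_eq hcentre (show 3 < k by omega)
  have h₀ : C (g n) = C (g (n + 1)) := Fin.eq_of_ne_of_ne_two (hn 0 (by omega)) (hn 1 (by omega))
  have h₂ : C (g (n + 2)) = C (g (n + 1)) :=
    Fin.eq_of_ne_of_ne_two (hn 2 (by omega)) (hn 1 (by omega))
  have hloop : g n = g (n + 2) :=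
    C.eq_of_adj_of_adj_of_color_eq hM (hg_adj n) (hg_adj (n + 1)) h₀ h₂
  exact Nat.add_mod_ne_mod (by omega) (by omega) (hg_inj _ _ hloop).symm
end

section
/- For every odd k ≥ 3, the odd k-pool does not admit a bipartizing matching; consequently, no graph containing an odd k-pool as a subgraph admits a bipartizing matching. -/
/-- The `k`-pool: internal cycle on `Sum.inl i` (`i : Fin k`), border `Sum.inr i`
adjacent to `Sum.inl i` and `Sum.inl ((i+1) % k)`. -/
def kPool (k : ℕ) : SimpleGraph (Fin k ⊕ Fin k) :=
  SimpleGraph.fromRel (fun a b =>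
    match a, b with
    | Sum.inl i, Sum.inl j => j.val = (i.val + 1) % k
    | Sum.inl i, Sum.inr j => i.val = j.val ∨ i.val = (j.val + 1) % k
    | _, _ => False)

/-!
Fix a 2-colouring of `kPool k \ M`. On the odd internal cycle some edge `p_i p_{i+1}` is
monochromatic, so it lies in `M`. Each border triangle also has a monochromatic edge, hence an
`M`-edge; once `p_{j+1}` is matched outside the triangle `p_{j+1} p_{j+2} b_{j+1}`, that edge must
be `p_{j+2} b_{j+1}`. Starting from `p_{i+1} p_i` and going once around the pool forces
`p_{i+1} b_i` into `M`, so `p_{i+1}` is matched twice.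
-/

open SimpleGraph Sum

open Fin.NatCast in
theorem Fin.forall_of_base_of_add_one {k : ℕ} [NeZero k] {P : Fin k → Prop} (a : Fin k)
    (ha : P a) (hstep : ∀ j, P j → P (j + 1)) (j : Fin k) : P j := by
  have hshift : ∀ n : ℕ, P (a + n) := by
    intro n
    induction n with
    | zero => simpa using ha
    | succ n ih => simpa [add_assoc] using hstep _ ih
  simpa using hshift (j - a).val

theorem Fin.val_add_one_eq_mod {k : ℕ} [NeZero k] (i : Fin k) :
    (i + 1).val = (i.val + 1) % k := by
  simp [Fin.val_add]

theorem Fin.self_ne_add_one {k : ℕ} [NeZero k] (hk : 2 ≤ k) (i : Fin k) : i ≠ i + 1 := by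
  simp only [ne_eq, left_eq_add, Fin.one_eq_zero_iff]
  omega

theorem Fin.self_ne_add_one_add_one {k : ℕ} [NeZero k] (hk : 3 ≤ k) (i : Fin k) :
    i ≠ i + 1 + 1 := by
  rw [ne_eq, add_assoc, left_eq_add]
  simp [Fin.ext_iff, Fin.val_add, Nat.mod_eq_of_lt (show 1 < k by omega),
    Nat.mod_eq_of_lt (show 2 < k by omega)]

namespace SimpleGraph

variable {V W : Type*} {G M : SimpleGraph V}

theorem cycleGraph_not_colorable_two {n : ℕ} (hn : 2 ≤ n) (hodd : Odd n) :
    ¬ (cycleGraph n).Colorable 2 := fun hc => by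
  have := hc.chromaticNumber_le
  rw [chromaticNumber_cycleGraph_of_odd n hn hodd] at this
  norm_num at this

theorem eq_add_one_or_eq_add_one_of_cycleGraph_adj {n : ℕ} [NeZero n] (hn : 2 ≤ n) {u v : Fin n}
    (huv : (cycleGraph n).Adj u v) : u = v + 1 ∨ v = u + 1 := by
  have hone : (1 : Fin n).val = 1 := by simp [Nat.mod_eq_of_lt (by omega : 1 < n)]
  simpa only [← hone, ← Fin.ext_iff, sub_eq_iff_eq_add'] using cycleGraph_adj'.mp huv

theorem exists_adj_of_colorable_sdiff {H : SimpleGraph W} {n : ℕ} (hM : (G \ M).Colorable n)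
    (f : H →g G) (hH : ¬ H.Colorable n) : ∃ u v, H.Adj u v ∧ M.Adj (f u) (f v) := by
  by_contra! h
  exact hH (hM.of_hom (⟨f, fun {u v} huv => ⟨f.map_adj huv, h u v huv⟩⟩ : H →g G \ M))

theorem Coloring.adj_of_eq {α : Type*} (C : (G \ M).Coloring α) {u v : V} (h : G.Adj u v)
    (hc : C u = C v) : M.Adj u v := by
  by_contra hM
  exact C.valid ⟨h, hM⟩ hc

theorem Coloring.adj_of_triangle (C : (G \ M).Coloring (Fin 2))
    (hmatch : ∀ v u w : V, M.Adj v u → M.Adj v w → u = w) {u v w x : V}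
    (huv : G.Adj u v) (huw : G.Adj u w) (hvw : G.Adj v w)
    (hx : M.Adj u x) (hxv : x ≠ v) (hxw : x ≠ w) : M.Adj v w := by
  have hcv : C u ≠ C v := fun h => hxv (hmatch _ _ _ hx (C.adj_of_eq huv h))
  have hcw : C u ≠ C w := fun h => hxw (hmatch _ _ _ hx (C.adj_of_eq huw h))
  exact C.adj_of_eq hvw (by omega)

end SimpleGraph

theorem IsBipartizingMatching.comap {V W : Type*} {G M : SimpleGraph V} {H : SimpleGraph W}
    (f : H →g G) (hf : Function.Injective f) (hM : IsBipartizingMatching G M) :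
    IsBipartizingMatching H (H ⊓ M.comap f) := by
  obtain ⟨-, hmatch, hcol⟩ := hM
  refine ⟨inf_le_left, fun v u w hu hw => hf (hmatch _ _ _ hu.2 hw.2), hcol.of_hom ⟨f, ?_⟩⟩
  rintro u v ⟨huv, hnot⟩
  exact ⟨f.map_adj huv, fun h => hnot ⟨huv, h⟩⟩

section kPool

variable {k : ℕ} [NeZero k]

theorem kPool_adj_inl_add_one (hk : 2 ≤ k) (i : Fin k) : (kPool k).Adj (inl i) (inl (i + 1)) := by
  simp only [kPool, fromRel_adj]
  exact ⟨by simpa using Fin.self_ne_add_one hk i, Or.inl (Fin.val_add_one_eq_mod i)⟩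

omit [NeZero k] in
theorem kPool_adj_inl_inr (i : Fin k) : (kPool k).Adj (inl i) (inr i) := by
  simp [kPool]

theorem kPool_adj_inl_add_one_inr (i : Fin k) : (kPool k).Adj (inl (i + 1)) (inr i) := by
  simp only [kPool, fromRel_adj]
  exact ⟨inl_ne_inr, Or.inl (Or.inr (Fin.val_add_one_eq_mod i))⟩

def kPool.cycle (hk : 2 ≤ k) : cycleGraph k →g kPool k where
  toFun := inl
  map_rel' {u v} huv := by
    rcases eq_add_one_or_eq_add_one_of_cycleGraph_adj hk huv with rfl | rfl
    · exact (kPool_adj_inl_add_one hk v).symm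
    · exact kPool_adj_inl_add_one hk u

theorem kPool_not_isBipartizingMatching (hk : 3 ≤ k) (hodd : Odd k)
    (M : SimpleGraph (Fin k ⊕ Fin k)) :
    ¬ IsBipartizingMatching (kPool k) M := by
  rintro ⟨-, hmatch, ⟨C⟩⟩
  obtain ⟨i, hi⟩ : ∃ i, M.Adj (inl (i + 1)) (inl i) := by
    obtain ⟨u, v, huv, hM⟩ := exists_adj_of_colorable_sdiff ⟨C⟩ (kPool.cycle (by omega))
      (cycleGraph_not_colorable_two (by omega) hodd)
    rcases eq_add_one_or_eq_add_one_of_cycleGraph_adj (by omega) huv with rfl | rfl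
    · exact ⟨v, hM⟩
    · exact ⟨u, hM.symm⟩
  have hstep : ∀ j x, M.Adj (inl (j + 1)) x → x ≠ inl (j + 1 + 1) → x ≠ inr (j + 1) →
      M.Adj (inl (j + 1 + 1)) (inr (j + 1)) := fun j _ =>
    C.adj_of_triangle hmatch (kPool_adj_inl_add_one (by omega) _) (kPool_adj_inl_inr _)
      (kPool_adj_inl_add_one_inr _)
  have hmatched : ∀ j, M.Adj (inl (j + 1)) (inr j) :=
    Fin.forall_of_base_of_add_one (i + 1)
      (hstep i _ hi (by simpa using Fin.self_ne_add_one_add_one hk i) inl_ne_inr)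
      (fun j hj => hstep j _ hj inr_ne_inl (by simpa using Fin.self_ne_add_one (by omega) j))
  exact inr_ne_inl (hmatch _ _ _ (hmatched i) hi)

end kPool

/-- For every odd `k ≥ 3`, the `k`-pool has no bipartizing matching; consequently no
graph containing the `k`-pool as a subgraph has one. -/
theorem odd_pool_no_bm (k : ℕ) (hk : 3 ≤ k) (hodd : Odd k) :
    (¬ ∃ M, IsBipartizingMatching (kPool k) M) ∧
    (∀ (V : Type) (G : SimpleGraph V) (f : kPool k →g G), Function.Injective f →
      ¬ ∃ M, IsBipartizingMatching G M) := by
  have : NeZero k := ⟨by omega⟩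
  have hpool : ¬ ∃ M, IsBipartizingMatching (kPool k) M := fun ⟨M, hM⟩ =>
    kPool_not_isBipartizingMatching hk hodd M hM
  exact ⟨hpool, fun V G f hf ⟨M, hM⟩ => hpool ⟨_, hM.comap f hf⟩⟩
end

section
/- Let G be an odd k-pool (k odd, k ≥ 3) with internal cycle C = p₁p₂…p_kp₁, and let b be the border with neighbors p₁ and p_k. Then every bipartizing matching M of G − b contains exactly one edge of C, and moreover p₁p_k ∉ M. -/
/-!
In `G - b` every triangle `p_i p_{i+1} b_i` survives except the one at `b`, and the cycle `C` is
odd, so each of them contains an edge of the bipartizing matching `M`. If `p_{i+1}` is matched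
inside the `i`-th triangle, the `(i+1)`-th triangle can only get its `M`-edge as `p_{i+2} b_{i+1}`;
so such a choice propagates along the chain of triangles up to `p_k`. An `M`-edge `p_i p_{i+1}`
starts this chain, hence no later cycle edge `p_j p_{j+1}` can be in `M`, and neither can `p_k p_1`,
because `p_1 p_k ∈ M` forces `b_1 p_2 ∈ M` and then `p_k` would be matched twice.
-/

namespace SimpleGraph.Coloring

variable {V : Type*} {G : SimpleGraph V}

theorem apply_eq_add_of_adj_seq (c : G.Coloring (ZMod 2)) (f : ℕ → V) {n : ℕ}
    (hf : ∀ i < n, G.Adj (f i) (f (i + 1))) : c (f n) = c (f 0) + n := by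
  induction n with
  | zero => simp
  | succ n ih =>
    have hne : c (f n) ≠ c (f (n + 1)) := c.valid (hf n n.lt_succ_self)
    have eq_add_one_of_ne : ∀ a b : ZMod 2, a ≠ b → b = a + 1 := by decide
    rw [eq_add_one_of_ne _ _ hne, ih fun i hi => hf i (by omega)]
    push_cast
    ring

theorem even_of_adj_seq_of_closed (c : G.Coloring (ZMod 2)) (f : ℕ → V) {n : ℕ}
    (hf : ∀ i < n, G.Adj (f i) (f (i + 1))) (hclosed : f n = f 0) : Even n := by
  have h := c.apply_eq_add_of_adj_seq f hf
  rwa [hclosed, left_eq_add, ZMod.natCast_eq_zero_iff_even] at h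

end SimpleGraph.Coloring

namespace IsBipartizingMatching

variable {V : Type*} {G M : SimpleGraph V}

theorem eq_of_adj (hM : IsBipartizingMatching G M) {v u w : V} (hu : M.Adj v u)
    (hw : M.Adj v w) : u = w :=
  hM.2.1 v u w hu hw

theorem exists_adj_of_odd_cycle (hM : IsBipartizingMatching G M) (f : ℕ → V) {n : ℕ}
    (hf : ∀ i < n, G.Adj (f i) (f (i + 1))) (hclosed : f n = f 0) (hn : Odd n) :
    ∃ i < n, M.Adj (f i) (f (i + 1)) := by
  by_contra! hno
  obtain ⟨c⟩ := hM.2.2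
  -- `ZMod 2` is `Fin 2` by definition
  have := (c : (G \ M).Coloring (ZMod 2)).even_of_adj_seq_of_closed f
    (fun i hi => (SimpleGraph.sdiff_adj _ _ _ _).mpr ⟨hf i hi, hno i hi⟩) hclosed
  exact Nat.not_even_iff_odd.mpr hn this

theorem adj_of_triangle_of_adj (hM : IsBipartizingMatching G M) {a b c x : V}
    (hab : G.Adj a b) (hbc : G.Adj b c) (hca : G.Adj c a) (hax : M.Adj a x) (hxb : x ≠ b)
    (hxc : x ≠ c) : M.Adj b c := by
  obtain ⟨i, hi, h⟩ := hM.exists_adj_of_odd_cycle (fun i => [a, b, c, a].getD i a) (n := 3)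
    (fun i hi => by interval_cases i <;> simpa) rfl (by decide)
  interval_cases i
  · exact absurd (hM.eq_of_adj hax h) hxb
  · exact h
  · exact absurd (hM.eq_of_adj hax h.symm) hxc

end IsBipartizingMatching

namespace KPool

variable {k : ℕ} [NeZero k]

-- `lastBorder k` is the paper's `b = b_k`, `cyc i` is `p_{i+1}` (indices mod `k`) and
-- `border j` is `b_{j+1}`.
variable (k) in
abbrev lastBorder : Fin k ⊕ Fin k := Sum.inr ⟨k - 1, Nat.sub_one_lt (NeZero.ne k)⟩

variable (k) in
abbrev minusLastBorder : SimpleGraph {x // x ≠ lastBorder k} :=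
  (kPool k).induce {x | x ≠ lastBorder k}

def cyc (i : ℕ) : {x // x ≠ lastBorder k} :=
  ⟨Sum.inl ⟨i % k, Nat.mod_lt _ (NeZero.pos k)⟩, Sum.inl_ne_inr⟩

def border (j : ℕ) (hj : j < k - 1) : {x // x ≠ lastBorder k} :=
  ⟨Sum.inr ⟨j, by omega⟩, by simp; omega⟩

theorem cyc_eq_cyc_iff {i j : ℕ} :
    (cyc i : {x // x ≠ lastBorder k}) = cyc j ↔ i % k = j % k := by
  simp [cyc, Fin.ext_iff]

@[simp]
theorem cyc_mod (i : ℕ) : (cyc (i % k) : {x // x ≠ lastBorder k}) = cyc i := by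
  simp [cyc_eq_cyc_iff]

theorem mk_inl_eq_cyc (i : Fin k) (h : Sum.inl i ≠ lastBorder k) :
    ⟨Sum.inl i, h⟩ = cyc i.val := by
  simp [cyc, Nat.mod_eq_of_lt i.isLt]

theorem cyc_ne_cyc_add {d : ℕ} (hd : 0 < d) (hdk : d < k) (i : ℕ) :
    (cyc i : {x // x ≠ lastBorder k}) ≠ cyc (i + d) := by
  intro h
  have hdvd : k ∣ i + d - i := (Nat.modEq_iff_dvd' (by omega)).mp (cyc_eq_cyc_iff.mp h)
  exact absurd (Nat.le_of_dvd hd (by simpa using hdvd)) (by omega)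

theorem border_ne_cyc {j : ℕ} (hj : j < k - 1) (i : ℕ) : border j hj ≠ cyc i := by
  simp [border, cyc]

theorem border_eq_border_iff {i j : ℕ} (hi : i < k - 1) (hj : j < k - 1) :
    border i hi = border j hj ↔ i = j := by
  simp [border]

theorem minusLastBorder_adj_cyc_succ (hk : 2 ≤ k) (i : ℕ) :
    (minusLastBorder k).Adj (cyc i) (cyc (i + 1)) := by
  refine ⟨fun h => cyc_ne_cyc_add one_pos (by omega) i (Subtype.ext h), Or.inl ?_⟩
  simp [cyc, Nat.add_mod]

theorem minusLastBorder_adj_border_cyc {j : ℕ} (hj : j < k - 1) :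
    (minusLastBorder k).Adj (border j hj) (cyc j) := by
  refine ⟨by simp [border, cyc], Or.inr (Or.inl ?_)⟩
  simp [Nat.mod_eq_of_lt (show j < k by omega)]

theorem minusLastBorder_adj_border_cyc_succ {j : ℕ} (hj : j < k - 1) :
    (minusLastBorder k).Adj (border j hj) (cyc (j + 1)) := by
  refine ⟨by simp [border, cyc], Or.inr (Or.inr ?_)⟩
  simp

variable {M : SimpleGraph {x // x ≠ lastBorder k}}

variable (M) in
def BackMatched (m : ℕ) (hm : m < k - 1) : Prop :=
  M.Adj (cyc (m + 1)) (cyc m) ∨ M.Adj (cyc (m + 1)) (border m hm)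

theorem BackMatched.succ (hk : 3 ≤ k) (hM : IsBipartizingMatching (minusLastBorder k) M)
    {m : ℕ} (hm : m + 1 < k - 1) (h : BackMatched M m (by omega)) : BackMatched M (m + 1) hm := by
  obtain ⟨x, hx, hx_cyc, hx_border⟩ : ∃ x, M.Adj (cyc (m + 1)) x ∧ x ≠ cyc (m + 1 + 1) ∧
      x ≠ border (m + 1) hm := by
    rcases h with h | h
    · refine ⟨_, h, cyc_ne_cyc_add two_pos (by omega) m, ?_⟩
      exact fun h' => border_ne_cyc hm m h'.symm
    · refine ⟨_, h, border_ne_cyc _ _, ?_⟩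
      rw [Ne, border_eq_border_iff]
      omega
  right
  exact hM.adj_of_triangle_of_adj (minusLastBorder_adj_cyc_succ (by omega) _)
    (minusLastBorder_adj_border_cyc_succ hm).symm (minusLastBorder_adj_border_cyc hm) hx
    hx_cyc hx_border

theorem BackMatched.of_le (hk : 3 ≤ k) (hM : IsBipartizingMatching (minusLastBorder k) M)
    {m n : ℕ} {hm : m < k - 1} (h : BackMatched M m hm) (hmn : m ≤ n) (hn : n < k - 1) :
    BackMatched M n hn := by
  induction n, hmn using Nat.le_induction with
  | base => exact h
  | succ n _ ih => exact (ih (by omega)).succ hk hM hn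

theorem BackMatched.not_adj (hk : 3 ≤ k) (hM : IsBipartizingMatching (minusLastBorder k) M)
    {m : ℕ} {hm : m < k - 1} (h : BackMatched M m hm) :
    ¬ M.Adj (cyc (m + 1)) (cyc (m + 1 + 1)) := by
  intro h'
  rcases h with h | h
  · exact cyc_ne_cyc_add two_pos (by omega) m (hM.eq_of_adj h h')
  · exact border_ne_cyc _ _ (hM.eq_of_adj h h')

theorem not_adj_cyc_zero_cyc_sub_one (hk : 3 ≤ k)
    (hM : IsBipartizingMatching (minusLastBorder k) M) : ¬ M.Adj (cyc 0) (cyc (k - 1)) := by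
  intro h
  have h₀ : BackMatched M 0 (by omega) := by
    right
    refine hM.adj_of_triangle_of_adj (minusLastBorder_adj_cyc_succ (by omega) 0)
      (minusLastBorder_adj_border_cyc_succ _).symm (minusLastBorder_adj_border_cyc _) h
      ?_ (border_ne_cyc _ _).symm
    rw [Ne, cyc_eq_cyc_iff, Nat.mod_eq_of_lt (by omega), Nat.mod_eq_of_lt (by omega)]
    omega
  have hx : M.Adj (cyc (k - 2 + 1)) (cyc 0) := by
    rw [show k - 2 + 1 = k - 1 by omega]
    exact h.symm
  rcases h₀.of_le hk hM (Nat.zero_le (k - 2)) (by omega) with h' | h'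
  · refine cyc_ne_cyc_add (k := k) (d := k - 2) (by omega) (by omega) 0 ?_
    simpa using hM.eq_of_adj hx h'
  · exact border_ne_cyc _ _ (hM.eq_of_adj hx h').symm

theorem lt_of_adj_cyc_succ (hk : 3 ≤ k) (hM : IsBipartizingMatching (minusLastBorder k) M)
    {i : ℕ} (hi : i < k) (h : M.Adj (cyc i) (cyc (i + 1))) : i < k - 1 := by
  by_contra hi'
  obtain rfl : i = k - 1 := by omega
  rw [show k - 1 + 1 = k by omega, ← cyc_mod k, Nat.mod_self] at h
  exact not_adj_cyc_zero_cyc_sub_one hk hM h.symm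

theorem not_adj_cyc_succ_of_lt (hk : 3 ≤ k) (hM : IsBipartizingMatching (minusLastBorder k) M)
    {i j : ℕ} (hij : i < j) (hj : j < k) (hi' : M.Adj (cyc i) (cyc (i + 1))) :
    ¬ M.Adj (cyc j) (cyc (j + 1)) := by
  intro hj'
  obtain ⟨m, rfl⟩ : ∃ m, j = m + 1 := ⟨j - 1, by omega⟩
  have hm := lt_of_adj_cyc_succ hk hM hj hj'
  have hi := lt_of_adj_cyc_succ hk hM (by omega) hi'
  exact (BackMatched.of_le hk hM (Or.inl hi'.symm : BackMatched M i hi) (by omega)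
    (by omega)).not_adj hk hM hj'

theorem eq_of_adj_cyc_succ (hk : 3 ≤ k) (hM : IsBipartizingMatching (minusLastBorder k) M)
    {i j : ℕ} (hi : i < k) (hj : j < k) (hi' : M.Adj (cyc i) (cyc (i + 1)))
    (hj' : M.Adj (cyc j) (cyc (j + 1))) : i = j := by
  rcases lt_trichotomy i j with h | h | h
  · exact (not_adj_cyc_succ_of_lt hk hM h hj hi' hj').elim
  · exact h
  · exact (not_adj_cyc_succ_of_lt hk hM h hi hj' hi').elim

theorem exists_adj_cyc_succ (hk : 2 ≤ k) (hodd : Odd k)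
    (hM : IsBipartizingMatching (minusLastBorder k) M) : ∃ i < k, M.Adj (cyc i) (cyc (i + 1)) :=
  hM.exists_adj_of_odd_cycle cyc (fun i _ => minusLastBorder_adj_cyc_succ hk i)
    (by rw [← cyc_mod k, Nat.mod_self]) hodd

end KPool

/-- Deleting the border `b = b_k` (adjacent to `p_k` and `p₁`) from an odd `k`-pool,
every bipartizing matching of the resulting graph contains exactly one edge of the
internal cycle, and this edge is not `p₁ p_k`. -/
theorem pool_minus_border_bm (k : ℕ) (hk : 3 ≤ k) (hodd : Odd k)
    (M : SimpleGraph {x : Fin k ⊕ Fin k // x ≠ Sum.inr ⟨k - 1, by omega⟩})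
    (hM : IsBipartizingMatching
      ((kPool k).induce {x : Fin k ⊕ Fin k | x ≠ Sum.inr ⟨k - 1, by omega⟩}) M) :
    (∃! i : Fin k,
      M.Adj ⟨Sum.inl i, by simp⟩ ⟨Sum.inl ⟨(i.val + 1) % k, Nat.mod_lt _ (by omega)⟩, by simp⟩) ∧
    ¬ M.Adj ⟨Sum.inl ⟨0, by omega⟩, by simp⟩ ⟨Sum.inl ⟨k - 1, by omega⟩, by simp⟩ := by
  have : NeZero k := ⟨by omega⟩
  simp only [KPool.mk_inl_eq_cyc, KPool.cyc_mod]
  refine ⟨?_, KPool.not_adj_cyc_zero_cyc_sub_one hk hM⟩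
  obtain ⟨i, hi, hadj⟩ := KPool.exists_adj_cyc_succ (by omega) hodd hM
  exact ⟨⟨i, hi⟩, hadj, fun j hj => Fin.ext (KPool.eq_of_adj_cyc_succ hk hM j.isLt hi hj hadj)⟩
end

section
/- If a connected P₅-free graph G admits a bipartizing matching, then G has a dominating set of size at most 4. -/
namespace SimpleGraph

variable {V W : Type*} {G : SimpleGraph V} {H : SimpleGraph W}

theorem pathGraph_five_isIndContained {a b c d e : V} (hab : G.Adj a b) (hbc : G.Adj b c)
    (hcd : G.Adj c d) (hde : G.Adj d e) (hac : ¬G.Adj a c) (had : ¬G.Adj a d)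
    (hae : ¬G.Adj a e) (hbd : ¬G.Adj b d) (hbe : ¬G.Adj b e) (hce : ¬G.Adj c e) :
    pathGraph 5 ⊴ G := by
  -- non-consecutive vertices are told apart by a neighbour of one that misses the other
  have : a ≠ c := fun h => had (h ▸ hcd)
  have : a ≠ d := fun h => hbd (h ▸ hab.symm)
  have : a ≠ e := fun h => hbe (h ▸ hab.symm)
  have : b ≠ d := fun h => had (h ▸ hab)
  have : b ≠ e := fun h => hae (h ▸ hab)
  have : c ≠ e := fun h => hbe (h ▸ hbc)
  refine ⟨⟨⟨![a, b, c, d, e], fun i j hij => ?_⟩, fun {i j} => ?_⟩⟩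
  · fin_cases i <;> fin_cases j <;> simp_all [hab.ne, hbc.ne, hcd.ne, hde.ne, eq_comm]
  · show G.Adj (![a, b, c, d, e] i) (![a, b, c, d, e] j) ↔ _
    fin_cases i <;> fin_cases j <;> simp [pathGraph_adj, *, G.adj_comm]

theorem Walk.dist_getVert_of_length_eq_dist {u v : W} {p : H.Walk u v}
    (hp : p.length = H.dist u v) {i : ℕ} (hi : i ≤ p.length) : H.dist u (p.getVert i) = i := by
  have := length_eq_dist_of_subwalk hp (p.isSubwalk_take i)
  rwa [Walk.take_length, min_eq_left hi, eq_comm] at this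

theorem Reachable.exists_induced_path_of_three_le_dist {u v : W} (huv : H.Reachable u v)
    (h : 3 ≤ H.dist u v) : ∃ a b c, H.Adj u a ∧ H.Adj a b ∧ H.Adj b c ∧
      ¬H.Adj u b ∧ ¬H.Adj u c ∧ ¬H.Adj a c := by
  obtain ⟨p, hp⟩ := huv.exists_walk_length_eq_dist
  have hd (i : ℕ) (hi : i ≤ 3) := p.dist_getVert_of_length_eq_dist hp (i := i) (by omega)
  refine ⟨p.getVert 1, p.getVert 2, p.getVert 3, ?_, p.adj_getVert_succ (by omega),
    p.adj_getVert_succ (by omega), fun h => ?_, fun h => ?_, fun h => ?_⟩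
  · simpa using p.adj_getVert_succ (i := 0) (by omega)
  · have := hd 2 (by omega); rw [dist_eq_one_iff_adj.mpr h] at this; omega
  · have := hd 3 (by omega); rw [dist_eq_one_iff_adj.mpr h] at this; omega
  · have := h.diff_dist_adj (u := u); rw [hd 1 (by omega), hd 3 (by omega)] at this; omega

theorem Reachable.exists_adj_adj_of_dist_le_two {u v : W} (huv : H.Reachable u v)
    (h : H.dist u v ≤ 2) (hne : u ≠ v) (hadj : ¬H.Adj u v) :
    ∃ w, H.Adj u w ∧ H.Adj w v := by
  have h2 : H.dist u v = 2 := by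
    have := huv.pos_dist_of_ne hne
    have := mt dist_eq_one_iff_adj.mp hadj
    omega
  obtain ⟨w, hw⟩ := (edist_eq_two_iff.mp (by rw [← huv.coe_dist_eq_edist, h2]; rfl)).2.2
  exact ⟨w, hw.1, hw.2.symm⟩

theorem connected_induce_of_forall_adj {s : Set V} {x : V} (hx : x ∈ s)
    (h : ∀ z ∈ s, z ≠ x → G.Adj x z) : (G.induce s).Connected := by
  refine (G.induce s).connected_iff_exists_forall_reachable.mpr
    ⟨⟨x, hx⟩, fun ⟨z, hz⟩ => ?_⟩
  by_cases hzx : z = x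
  · subst hzx; rfl
  · exact Adj.reachable (G := G.induce s) (h z hz hzx)

theorem connected_induce_diff_singleton_of_dist_le {s : Set V} (hs : (G.induce s).Connected)
    {r y : s} (hry : r ≠ y) (hmax : ∀ z, (G.induce s).dist r z ≤ (G.induce s).dist r y) :
    (G.induce (s \ {y.1})).Connected := by
  classical
  refine G.induce_connected_of_patches r.1 ⟨r.2, fun h => hry (Subtype.ext h)⟩ fun {v} hv => ?_
  obtain ⟨p, hp⟩ := hs.exists_walk_length_eq_dist r ⟨v, hv.1⟩
  have hy : y ∉ p.support := by
    intro hy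
    have hlt := p.length_takeUntil_lt_length hy fun h => hv.2 (congrArg Subtype.val h).symm
    have := dist_le (p.takeUntil y hy)
    have := hmax ⟨v, hv.1⟩
    omega
  let q := p.map (Embedding.induce s).toHom
  refine ⟨{x | x ∈ q.support}, fun x hx => ?_, q.start_mem_support, q.end_mem_support,
    q.connected_induce_support.preconnected _ _⟩
  simp only [q, Set.mem_ofPred_eq, Walk.support_map, List.mem_map] at hx
  obtain ⟨z, hz, rfl⟩ := hx
  exact ⟨z.2, fun h => hy (Subtype.ext h ▸ hz)⟩

def IsPrivateNeighbor (G : SimpleGraph V) (s : Set V) (a p : V) : Prop :=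
  p ∉ s ∧ G.Adj a p ∧ ∀ z ∈ s, G.Adj p z → z = a

theorem IsPrivateNeighbor.not_adj {s : Set V} {a p z : V} (hp : G.IsPrivateNeighbor s a p)
    (hz : z ∈ s) (hza : z ≠ a) : ¬G.Adj p z :=
  fun h => hza (hp.2.2 z hz h)

/-- A vertex at distance 3 would extend the private edge to an induced `P₅`. -/
theorem IsPrivateNeighbor.dist_le_two (hP5 : ¬pathGraph 5 ⊴ G) {s : Set V}
    (hs : (G.induce s).Preconnected) {a p : V} (ha : a ∈ s) (hp : G.IsPrivateNeighbor s a p)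
    (z : s) : (G.induce s).dist ⟨a, ha⟩ z ≤ 2 := by
  by_contra! h
  obtain ⟨⟨b, hb⟩, ⟨c, hc⟩, ⟨d, hd⟩, hab, hbc, hcd, hac, had, hbd⟩ :=
    (hs ⟨a, ha⟩ z).exists_induced_path_of_three_le_dist h
  simp only [induce_adj] at hab hbc hcd hac had hbd
  have hca : c ≠ a := fun h => had (h ▸ hcd)
  have hda : d ≠ a := fun h => hac (h ▸ hcd.symm)
  exact hP5 (pathGraph_five_isIndContained hp.2.1.symm hab hbc hcd (hp.not_adj hb hab.ne.symm)
    (hp.not_adj hc hca) (hp.not_adj hd hda) hac had hbd)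

def IsDominating (G : SimpleGraph V) (s : Set V) : Prop := ∀ v ∉ s, ∃ u ∈ s, G.Adj v u

def IsConnectedDominating (G : SimpleGraph V) (s : Set V) : Prop :=
  (G.induce s).Connected ∧ G.IsDominating s

theorem IsConnectedDominating.connected_induce_insert {s : Set V}
    (hs : G.IsConnectedDominating s) (v : V) : (G.induce (insert v s)).Connected := by
  by_cases hv : v ∈ s
  · rw [Set.insert_eq_of_mem hv]
    exact hs.1
  · obtain ⟨u, hu, hvu⟩ := hs.2 v hv
    rw [Set.insert_eq]
    exact connected_induce_union
      (connected_induce_of_forall_adj (Set.mem_singleton v) (by simp)).preconnected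
      hs.1.preconnected (Set.mem_singleton v) hu hvu

theorem IsDominating.exists_isPrivateNeighbor {s : Set V} (hs : G.IsDominating s) {y z : V}
    (hz : z ∈ s) (hyz : G.Adj y z) (hd : ¬G.IsDominating (s \ {y})) :
    ∃ p, G.IsPrivateNeighbor s y p := by
  simp only [IsDominating, not_forall, not_exists, not_and] at hd
  obtain ⟨p, hp, hpriv⟩ := hd
  have hpy : p ≠ y := by
    rintro rfl
    exact hpriv z ⟨hz, hyz.ne.symm⟩ hyz
  have hps : p ∉ s := fun h => hp ⟨h, hpy⟩
  have hpriv' : ∀ u ∈ s, G.Adj p u → u = y :=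
    fun u hu hpu => by_contra fun huy => hpriv u ⟨hu, huy⟩ hpu
  obtain ⟨u, hu, hpu⟩ := hs p hps
  exact ⟨p, hps, hpriv' u hu hpu ▸ hpu.symm, hpriv'⟩

/-- An undominated vertex `v` is joined to `a` by a path `v u a` (eccentricity bound in
`G[s ∪ {v}]`), and `v u a pa pc` is then an induced `P₅`. -/
theorem IsConnectedDominating.isDominating_triple (hP5 : ¬pathGraph 5 ⊴ G) {s : Set V}
    (hs : G.IsConnectedDominating s) {a b c pa pc : V} (ha : a ∈ s) (hb : b ∈ s) (hc : c ∈ s)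
    (hab : G.Adj a b) (hbc : G.Adj b c) (hac : ¬G.Adj a c) (hne : a ≠ c)
    (hpa : G.IsPrivateNeighbor s a pa) (hpc : G.IsPrivateNeighbor s c pc)
    (hpapc : G.Adj pa pc) : G.IsDominating {a, b, c} := by
  intro v hv
  by_contra! hnd
  simp only [Set.mem_insert_iff, Set.mem_singleton_iff, not_or] at hv
  have hva : ¬G.Adj v a := hnd a (by simp)
  have hvb : ¬G.Adj v b := hnd b (by simp)
  have hvc : ¬G.Adj v c := hnd c (by simp)
  have hpab := hpa.not_adj hb hab.ne.symm
  have hpac := hpa.not_adj hc hne.symm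
  have hpcb := hpc.not_adj hb hbc.ne
  have hpca := hpc.not_adj ha hne
  have hvpa : ¬G.Adj v pa := fun h =>
    hP5 (pathGraph_five_isIndContained h hpa.2.1.symm hab hbc hva hvb hvc hpab hpac hac)
  have hvpc : ¬G.Adj v pc := fun h =>
    hP5 (pathGraph_five_isIndContained h hpc.2.1.symm hbc.symm hab.symm hvc hvb hva hpcb hpca
      (fun h => hac h.symm))
  have hpa' : G.IsPrivateNeighbor (insert v s) a pa := by
    refine ⟨?_, hpa.2.1, fun z hz hpz => ?_⟩
    · rintro (h | h)
      · exact hva (h ▸ hpa.2.1.symm)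
      · exact hpa.1 h
    · rcases hz with rfl | hz
      · exact absurd hpz.symm hvpa
      · exact hpa.2.2 z hz hpz
  have hconn := (hs.connected_induce_insert v).preconnected
  obtain ⟨⟨u, hu⟩, hau, huv⟩ := (hconn _ _).exists_adj_adj_of_dist_le_two
    (hpa'.dist_le_two hP5 hconn (Set.mem_insert_of_mem v ha) ⟨v, Set.mem_insert v s⟩)
    (fun h => hv.1 (congrArg Subtype.val h).symm) (fun h => hva h.symm)
  simp only [induce_adj] at hau huv
  have hus : u ∈ s := hu.resolve_left fun h => huv.ne h
  have huc : u ≠ c := fun h => hvc (h ▸ huv.symm)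
  exact hP5 (pathGraph_five_isIndContained huv.symm hau.symm hpa.2.1 hpapc hva hvpa hvpc
    (fun h => hpa.not_adj hus hau.ne.symm h.symm) (fun h => hpc.not_adj hus huc h.symm)
    (fun h => hpca h.symm))

def IsMinConnectedDominating (G : SimpleGraph V) (X : Finset V) : Prop :=
  G.IsConnectedDominating X ∧ ∀ Y : Finset V, G.IsConnectedDominating Y → X.card ≤ Y.card

theorem Connected.exists_isMinConnectedDominating [Fintype V] (hG : G.Connected) :
    ∃ X, G.IsMinConnectedDominating X := by
  classical
  have huniv : G.IsConnectedDominating (Finset.univ : Finset V) := by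
    refine ⟨?_, fun v hv => absurd (Finset.mem_coe.mpr (Finset.mem_univ v)) hv⟩
    rw [Finset.coe_univ]
    exact G.induceUnivIso.symm.connected_iff.mp hG
  obtain ⟨X, hX, hmin⟩ := Finset.exists_min_image {Y : Finset V | G.IsConnectedDominating Y}
    Finset.card ⟨_, Finset.mem_filter.mpr ⟨Finset.mem_univ _, huniv⟩⟩
  exact ⟨X, (Finset.mem_filter.mp hX).2,
    fun Y hY => hmin Y (Finset.mem_filter.mpr ⟨Finset.mem_univ _, hY⟩)⟩

namespace IsMinConnectedDominating

variable {X : Finset V}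

theorem exists_isPrivateNeighbor {y : V} (hX : G.IsMinConnectedDominating X) (hy : y ∈ X)
    (hc : (G.induce (↑X \ {y})).Connected) : ∃ p, G.IsPrivateNeighbor X y p := by
  classical
  obtain ⟨⟨z, hz⟩⟩ := hc.nonempty
  obtain ⟨w⟩ := hX.1.1.preconnected ⟨y, hy⟩ ⟨z, hz.1⟩
  have hyz : (⟨y, hy⟩ : (X : Set V)) ≠ ⟨z, hz.1⟩ :=
    fun h => hz.2 (congrArg Subtype.val h).symm
  refine hX.1.2.exists_isPrivateNeighbor w.snd.2 (w.adj_snd (w.not_nil_of_ne hyz)) fun hd => ?_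
  have := hX.2 (X.erase y) (by rw [Finset.coe_erase]; exact ⟨hc, hd⟩)
  rw [Finset.card_erase_of_mem hy] at this
  have := Finset.card_pos.mpr ⟨y, hy⟩
  omega

theorem card_le_three_of_not_adj (hX : G.IsMinConnectedDominating X)
    (hP5 : ¬pathGraph 5 ⊴ G) {a b c pa pc : V} (ha : a ∈ X) (hb : b ∈ X) (hc : c ∈ X)
    (hab : G.Adj a b) (hbc : G.Adj b c) (hac : ¬G.Adj a c) (hne : a ≠ c)
    (hpa : G.IsPrivateNeighbor X a pa) (hpc : G.IsPrivateNeighbor X c pc) :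
    X.card ≤ 3 := by
  classical
  by_cases hpapc : G.Adj pa pc
  · have hdom := hX.1.isDominating_triple hP5 ha hb hc hab hbc hac hne hpa hpc hpapc
    have hconn : (G.induce {a, b, c}).Connected := connected_induce_of_forall_adj (x := b)
      (by simp) (by rintro z (rfl | rfl | rfl) hz <;> simp_all [G.adj_comm])
    calc X.card ≤ ({a, b, c} : Finset V).card := hX.2 _ (by push_cast; exact ⟨hconn, hdom⟩)
      _ ≤ 3 := Finset.card_le_three
  · exact (hP5 (pathGraph_five_isIndContained hpa.2.1.symm hab hbc hpc.2.1
      (hpa.not_adj hb hab.ne.symm) (hpa.not_adj hc hne.symm) hpapc hac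
      (fun h => hpc.not_adj ha hne h.symm) (fun h => hpc.not_adj hb hbc.ne h.symm))).elim

theorem exists_farthest_isPrivateNeighbor (hX : G.IsMinConnectedDominating X)
    (hX2 : 2 ≤ X.card) (r : (X : Set V)) :
    ∃ y : (X : Set V), (∀ z, (G.induce X).dist r z ≤ (G.induce X).dist r y) ∧
      ∃ p, G.IsPrivateNeighbor X y p := by
  have : Nonempty (X : Set V) := ⟨r⟩
  obtain ⟨y, hy⟩ := Finite.exists_max ((G.induce X).dist r)
  obtain ⟨z, hz, hzr⟩ := Finset.exists_mem_ne hX2 r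
  have hrz := hX.1.1.pos_dist_of_ne (u := r) (v := ⟨z, hz⟩)
    fun h => hzr (congrArg Subtype.val h).symm
  have hry : r ≠ y := by
    rintro rfl
    have := hy ⟨z, hz⟩
    simp only [dist_self] at this
    omega
  exact ⟨y, hy, hX.exists_isPrivateNeighbor y.2
    (connected_induce_diff_singleton_of_dist_le hX.1.1 hry hy)⟩

theorem isClique (hX : G.IsMinConnectedDominating X) (hP5 : ¬pathGraph 5 ⊴ G)
    (hX4 : 4 ≤ X.card) : G.IsClique (X : Set V) := by
  obtain ⟨r, hr⟩ := Finset.card_pos.mp (by omega : 0 < X.card)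
  obtain ⟨x, -, px, hpx⟩ := hX.exists_farthest_isPrivateNeighbor (by omega) ⟨r, hr⟩
  obtain ⟨y, hy, py, hpy⟩ := hX.exists_farthest_isPrivateNeighbor (by omega) x
  have hconn := hX.1.1
  have hxy : (G.induce X).dist x y ≤ 1 := by
    by_contra! h1
    have hne : x ≠ y := by rintro rfl; simp at h1
    have hnadj : ¬(G.induce X).Adj x y := fun h => by rw [dist_eq_one_iff_adj.mpr h] at h1; omega
    obtain ⟨m, hxm, hmy⟩ := (hconn.preconnected x y).exists_adj_adj_of_dist_le_two
      (hpx.dist_le_two hP5 hconn.preconnected x.2 y) hne hnadj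
    have := hX.card_le_three_of_not_adj hP5 x.2 m.2 y.2 hxm hmy hnadj
      (fun h => hne (Subtype.ext h)) hpx hpy
    omega
  have hx_adj : ∀ z ∈ X, z ≠ x.1 → G.Adj x z := by
    intro z hz hzx
    have hpos := hconn.pos_dist_of_ne (u := x) (v := ⟨z, hz⟩)
      fun h => hzx (congrArg Subtype.val h).symm
    have hle := (hy ⟨z, hz⟩).trans hxy
    exact (dist_eq_one_iff_adj.mp (by omega) : (G.induce X).Adj x ⟨z, hz⟩)
  have hpriv : ∀ u ∈ X, u ≠ x.1 → ∃ p, G.IsPrivateNeighbor X u p := fun u hu hux =>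
    hX.exists_isPrivateNeighbor hu (connected_induce_of_forall_adj ⟨x.2, hux.symm⟩
      fun z hz hzx => hx_adj z hz.1 hzx)
  intro u hu w hw huw
  by_cases hux : u = x.1
  · exact hux ▸ hx_adj w hw (hux ▸ huw.symm)
  by_cases hwx : w = x.1
  · exact hwx ▸ (hx_adj u hu (hwx ▸ huw)).symm
  by_contra huw'
  obtain ⟨pu, hpu⟩ := hpriv u hu hux
  obtain ⟨pw, hpw⟩ := hpriv w hw hwx
  have := hX.card_le_three_of_not_adj hP5 hu x.2 hw (hx_adj u hu hux).symm (hx_adj w hw hwx)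
    huw' huw hpu hpw
  omega

end IsMinConnectedDominating

theorem IsClique.card_le_two_mul_of_colorable_sdiff {M : SimpleGraph V}
    (hM : ∀ v u w : V, M.Adj v u → M.Adj v w → u = w) {n : ℕ} (hC : (G \ M).Colorable n)
    {s : Finset V} (hs : G.IsClique (s : Set V)) : s.card ≤ 2 * n := by
  classical
  obtain ⟨C⟩ := hC
  by_contra! h
  obtain ⟨i, -, hi⟩ := Finset.exists_lt_card_fiber_of_mul_lt_card_of_maps_to (f := C)
    (t := Finset.univ) (n := 2) (fun _ _ => Finset.mem_univ _) (by simpa [mul_comm] using h)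
  obtain ⟨a, ha, b, hb, c, hc, hab, hac, hbc⟩ := Finset.two_lt_card.mp hi
  simp only [Finset.mem_filter] at ha hb hc
  have hM' : ∀ {u w}, u ∈ s → w ∈ s → u ≠ w → C u = C w → M.Adj u w :=
    fun hu hw huw hcol => by_contra fun hm =>
      C.valid ((sdiff_adj _ _ _ _).mpr ⟨hs hu hw huw, hm⟩) hcol
  exact hbc (hM a b c (hM' ha.1 hb.1 hab (ha.2.trans hb.2.symm))
    (hM' ha.1 hc.1 hac (ha.2.trans hc.2.symm)))

end SimpleGraph

theorem p5_free_bm_dominating_general {V : Type*} [Fintype V] (G : SimpleGraph V)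
    (hconn : G.Connected)
    (hP5 : ¬ ∃ f : Fin 5 → V, Function.Injective f ∧
      ∀ i j : Fin 5, G.Adj (f i) (f j) ↔ (i.val + 1 = j.val ∨ j.val + 1 = i.val))
    (hbm : ∃ M, IsBipartizingMatching G M) :
    ∃ S : Finset V, S.card ≤ 4 ∧ ∀ v : V, v ∉ S → ∃ u ∈ S, G.Adj v u := by
  obtain ⟨M, -, hM, hC⟩ := hbm
  have hP5' : ¬(SimpleGraph.pathGraph 5).IsIndContained G := fun ⟨e⟩ =>
    hP5 ⟨e, e.injective, fun i j => by rw [e.map_adj_iff, SimpleGraph.pathGraph_adj]⟩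
  obtain ⟨X, hX⟩ := hconn.exists_isMinConnectedDominating
  refine ⟨X, ?_, hX.1.2⟩
  by_contra! h
  have := SimpleGraph.IsClique.card_le_two_mul_of_colorable_sdiff hM hC
    (hX.isClique hP5' (by omega))
  omega

/-- A connected `P₅`-free graph admitting a bipartizing matching has a dominating set
of size at most 4. -/
theorem p5_free_bm_dominating {V : Type*} [Fintype V] [DecidableEq V] (G : SimpleGraph V)
    (hconn : G.Connected)
    (hP5 : ¬ ∃ f : Fin 5 → V, Function.Injective f ∧
      ∀ i j : Fin 5, G.Adj (f i) (f j) ↔ (i.val + 1 = j.val ∨ j.val + 1 = i.val))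
    (hbm : ∃ M, IsBipartizingMatching G M) :
    ∃ S : Finset V, S.card ≤ 4 ∧ ∀ v : V, v ∉ S → ∃ u ∈ S, G.Adj v u :=
  p5_free_bm_dominating_general G hconn hP5 hbm
end

section
/- If two vertices u and v of a graph G have at least 2d+1 common neighbors, then in every (2,d)-coloring of G, the vertices u and v receive the same color. -/
open Finset

lemma Fin.two_eq_or_eq_of_ne {i j : Fin 2} (hij : i ≠ j) (k : Fin 2) : k = i ∨ k = j := by
  omega

lemma Finset.card_le_card_filter_add_card_filter_of_ne {α : Type*} {c : α → Fin 2}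
    {i j : Fin 2} (hij : i ≠ j) (S : Finset α) :
    #S ≤ #{w ∈ S | c w = i} + #{w ∈ S | c w = j} := by
  classical
  calc #S ≤ #({w ∈ S | c w = i} ∪ {w ∈ S | c w = j}) := by
        refine card_le_card fun w hw => ?_
        simpa [filter_or, hw] using Fin.two_eq_or_eq_of_ne hij (c w)
    _ ≤ _ := card_union_le _ _

namespace SimpleGraph

variable {V α : Type*} {G : SimpleGraph V}

lemma card_filter_color_eq_le_of_forall_adj [Finite V] [DecidableEq α] (c : V → α) {x : V}
    {d : ℕ}
    (hx : {y : V | G.Adj x y ∧ c y = c x}.ncard ≤ d) {S : Finset V}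
    (hS : ∀ w ∈ S, G.Adj x w) : #{w ∈ S | c w = c x} ≤ d := by
  calc #{w ∈ S | c w = c x}
      = (↑{w ∈ S | c w = c x} : Set V).ncard := (Set.ncard_coe_finset _).symm
    _ ≤ {y : V | G.Adj x y ∧ c y = c x}.ncard := by
        refine Set.ncard_le_ncard (fun y hy => ?_) (Set.toFinite _)
        rw [coe_filter] at hy
        exact ⟨hS y hy.1, hy.2⟩
    _ ≤ d := hx

end SimpleGraph

/-- If `u` and `v` have at least `2d+1` common neighbors, then in every `(2,d)`-coloring
of `G` they receive the same color. -/
theorem same_color_of_many_common_neighbors {V : Type*} [Fintype V] (G : SimpleGraph V)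
    (d : ℕ) (u v : V) (S : Finset V) (hcard : 2 * d + 1 ≤ S.card)
    (hS : ∀ w ∈ S, G.Adj u w ∧ G.Adj v w)
    (c : V → Fin 2) (hc : ∀ x : V, {y : V | G.Adj x y ∧ c y = c x}.ncard ≤ d) :
    c u = c v := by
  by_contra hne
  have hu := G.card_filter_color_eq_le_of_forall_adj c (hc u) fun w hw => (hS w hw).1
  have hv := G.card_filter_color_eq_le_of_forall_adj c (hc v) fun w hw => (hS w hw).2
  have hsplit := card_le_card_filter_add_card_filter_of_ne (c := c) hne S
  omega
end

section
/- Let G be a graph in which every odd cycle is a triangle and whose four vertices {v₁, v₂, v₃, u} induce a K₄. If G is connected, has no cut vertex, and contains a vertex outside {v₁, v₂, v₃, u}, then G has an odd cycle of length at least 5 (a contradiction); hence in such a 2-connected graph containing K₄, V(G) = {v₁, v₂, v₃, u}. -/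
namespace SimpleGraph

variable {V : Type*} {G : SimpleGraph V}

def OddCyclesAreTriangles (G : SimpleGraph V) : Prop :=
  ∀ (a : V) (w : G.Walk a a), w.IsCycle → Odd w.length → w.length = 3

namespace Walk

theorem IsPath.isCycle_cons {x s : V} {q : G.Walk x s} (hq : q.IsPath) (h : G.Adj s x)
    (hl : q.length ≠ 1) : (cons h q).IsCycle :=
  (cons_isCycle_iff q h).2 ⟨hq, fun he => hl (hq.length_eq_one_of_mem_edges (Sym2.eq_swap ▸ he))⟩

theorem exists_isPath_adj_mem_of_not_mem {x a : V} (T : Set V) (W : G.Walk x a) (ha : a ∈ T)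
    (hx : x ∉ T) : ∃ y d, G.Adj y d ∧ d ∈ T ∧
      ∃ p : G.Walk x y, p.IsPath ∧ ∀ v ∈ p.support, v ∈ W.support ∧ v ∉ T := by
  classical
  suffices ∃ y d, G.Adj y d ∧ d ∈ T ∧ ∃ p : G.Walk x y, ∀ v ∈ p.support, v ∈ W.support ∧ v ∉ T by
    obtain ⟨y, d, hyd, hd, p, hp⟩ := this
    exact ⟨y, d, hyd, hd, p.bypass, p.bypass_isPath,
      fun v hv => hp v (p.support_bypass_subset_support hv)⟩
  induction W with
  | nil => exact absurd ha hx
  | @cons x z a e W ih =>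
    by_cases hz : z ∈ T
    · exact ⟨x, z, e, hz, nil, by simp [hx]⟩
    · obtain ⟨y, d, hyd, hd, p, hp⟩ := ih ha hz
      refine ⟨y, d, hyd, hd, cons e p, ?_⟩
      simp only [support_cons, List.mem_cons, forall_eq_or_imp, true_or, true_and]
      exact ⟨hx, fun v hv => ⟨Or.inr (hp v hv).1, (hp v hv).2⟩⟩

end Walk

namespace OddCyclesAreTriangles

/-- The two cycles `s x ⋯ y a b s` and `s x ⋯ y a b c s` have lengths differing by one and
both at least `4`, so one of them is an odd cycle that is not a triangle. -/
theorem false_of_isPath_around_triangle (htri : G.OddCyclesAreTriangles) {s a b c x y : V}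
    (hab : G.Adj a b) (hbc : G.Adj b c) (hbs : G.Adj b s) (hcs : G.Adj c s) (hsa : s ≠ a)
    (hca : c ≠ a) (hsx : G.Adj s x) (hya : G.Adj y a) (p : G.Walk x y) (hp : p.IsPath)
    (hs : s ∉ p.support) (ha : a ∉ p.support) (hb : b ∉ p.support) (hc : c ∉ p.support) :
    False := by
  have hq₄ : (((p.concat hya).concat hab).concat hbs).IsPath :=
    ((hp.concat ha hya).concat (by simp [hb, hab.ne']) hab).concat
      (by simp [hs, hsa, hbs.ne']) hbs
  have hq₅ : ((((p.concat hya).concat hab).concat hbc).concat hcs).IsPath :=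
    (((hp.concat ha hya).concat (by simp [hb, hab.ne']) hab).concat
      (by simp [hc, hca, hbc.ne']) hbc).concat (by simp [hs, hsa, hbs.ne', hcs.ne']) hcs
  have hc₄ := hq₄.isCycle_cons hsx (by simp)
  have hc₅ := hq₅.isCycle_cons hsx (by simp)
  rcases Nat.even_or_odd p.length with hev | hodd
  · have := htri _ _ hc₅ (by simpa [parity_simps] using hev)
    simp at this
  · have := htri _ _ hc₄ (by simpa [parity_simps] using hodd)
    simp at this

theorem eq_of_adj_of_K4 (htri : G.OddCyclesAreTriangles) {s a b c x : V}
    (hcut : (G.induce {v | v ≠ s}).Connected)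
    (hsa : G.Adj s a) (hsb : G.Adj s b) (hsc : G.Adj s c)
    (hab : G.Adj a b) (hac : G.Adj a c) (hbc : G.Adj b c) (hsx : G.Adj s x) :
    x = a ∨ x = b ∨ x = c := by
  by_contra hxT
  obtain ⟨W⟩ := hcut ⟨x, hsx.ne'⟩ ⟨a, hsa.ne'⟩
  have hWs : ∀ v ∈ (W.map (Embedding.induce _).toHom).support, v ≠ s := by
    rw [Walk.support_map]
    intro _ hv
    obtain ⟨⟨v, hvs⟩, -, rfl⟩ := List.mem_map.1 hv
    exact hvs
  obtain ⟨y, d, hyd, hd, p, hp, hpWT⟩ :=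
    (W.map (Embedding.induce _).toHom).exists_isPath_adj_mem_of_not_mem
      {v | v = a ∨ v = b ∨ v = c} (Or.inl rfl) hxT
  have hs : s ∉ p.support := fun h => hWs s (hpWT s h).1 rfl
  have ha : a ∉ p.support := fun h => (hpWT a h).2 (Or.inl rfl)
  have hb : b ∉ p.support := fun h => (hpWT b h).2 (Or.inr (Or.inl rfl))
  have hc : c ∉ p.support := fun h => (hpWT c h).2 (Or.inr (Or.inr rfl))
  rcases hd with rfl | rfl | rfl
  · exact htri.false_of_isPath_around_triangle hab hbc hsb.symm hsc.symm hsa.ne hac.ne' hsx hyd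
      p hp hs ha hb hc
  · exact htri.false_of_isPath_around_triangle hbc hac.symm hsc.symm hsa.symm hsb.ne hab.ne hsx
      hyd p hp hs hb hc ha
  · exact htri.false_of_isPath_around_triangle hac.symm hab hsa.symm hsb.symm hsc.ne hbc.ne hsx
      hyd p hp hs hc ha hb

end OddCyclesAreTriangles

end SimpleGraph

theorem two_connected_triangle_only_K4_general {V : Type*} (G : SimpleGraph V)
    (htri : ∀ (a : V) (w : G.Walk a a), w.IsCycle → Odd w.length → w.length = 3)
    (hconn : G.Connected)
    (hcut : ∀ a : V, (G.induce {w : V | w ≠ a}).Connected)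
    (v₁ v₂ v₃ u : V)
    (e1 : G.Adj v₁ v₂) (e2 : G.Adj v₁ v₃) (e3 : G.Adj v₂ v₃)
    (e4 : G.Adj u v₁) (e5 : G.Adj u v₂) (e6 : G.Adj u v₃) :
    ∀ w : V, w = v₁ ∨ w = v₂ ∨ w = v₃ ∨ w = u := by
  intro w
  by_contra hw
  obtain ⟨W⟩ := hconn u w
  obtain ⟨⟨⟨s, x⟩, hsx⟩, -, hs, hx⟩ :=
    W.exists_boundary_dart {v | v = v₁ ∨ v = v₂ ∨ v = v₃ ∨ v = u} (by simp) hw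
  have htri : G.OddCyclesAreTriangles := htri
  dsimp only at hsx hs hx
  rcases hs with rfl | rfl | rfl | rfl
  · have := htri.eq_of_adj_of_K4 (hcut _) e1 e2 e4.symm e3 e5.symm e6.symm hsx
    exact hx (by tauto)
  · have := htri.eq_of_adj_of_K4 (hcut _) e1.symm e3 e5.symm e2 e4.symm e6.symm hsx
    exact hx (by tauto)
  · have := htri.eq_of_adj_of_K4 (hcut _) e2.symm e3.symm e6.symm e1 e4.symm e5.symm hsx
    exact hx (by tauto)
  · have := htri.eq_of_adj_of_K4 (hcut _) e4 e5 e6 e1 e2 e3 hsx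
    exact hx (by tauto)

/-- If every odd cycle of `G` is a triangle, `G` is connected with no cut vertex, and
`G` contains a `K₄` on `{v₁, v₂, v₃, u}`, then `G` has no further vertex. -/
theorem two_connected_triangle_only_K4 {V : Type*} (G : SimpleGraph V)
    (htri : ∀ (a : V) (w : G.Walk a a), w.IsCycle → Odd w.length → w.length = 3)
    (hconn : G.Connected)
    (hcut : ∀ a : V, (G.induce {w : V | w ≠ a}).Connected)
    (v₁ v₂ v₃ u : V)
    (h12 : v₁ ≠ v₂) (h13 : v₁ ≠ v₃) (h23 : v₂ ≠ v₃)
    (hu1 : u ≠ v₁) (hu2 : u ≠ v₂) (hu3 : u ≠ v₃)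
    (e1 : G.Adj v₁ v₂) (e2 : G.Adj v₁ v₃) (e3 : G.Adj v₂ v₃)
    (e4 : G.Adj u v₁) (e5 : G.Adj u v₂) (e6 : G.Adj u v₃) :
    ∀ w : V, w = v₁ ∨ w = v₂ ∨ w = v₃ ∨ w = u :=
  two_connected_triangle_only_K4_general G htri hconn hcut v₁ v₂ v₃ u e1 e2 e3 e4 e5 e6
end
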